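/- arXiv:2205.01985 — 2 statements merged into one kernel-verified Lean document; each statement's English description precedes it below -/
import Mathlib

section
/- Let G=(V,E) be a finite simple undirected graph with m=|E| edges, let 0 < p_e < 1 for all e ∈ E and 0 < λ_v ≤ 1 for all v ∈ V, and let π_wrc be the weighted random cluster distribution with edge parameters p and vertex weights λ. Let P_EF be the lazy edge-flipping (Metropolis) dynamics for π_wrc, and let P_SB be the lazy single-bond dynamics. Then for all S, S' ⊆ E with S ≠ S', P_SB(S,S') ≥ P_EF(S,S')/3. -/
/-!
Fix `T ∌ e = {u, v}` and write `c` for the probability that the single-bond dynamics adds `e`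
to `T`. The cluster factor of `T ∪ {e}` is that of `T`, multiplied by
`(1 + ∏_{C_u ∪ C_v} λ) / ((1 + ∏_{C_u} λ)(1 + ∏_{C_v} λ))` when `e` merges two clusters, so
`π(T ∪ {e}) / π(T) = c / (1 - p_e)`, while the dynamics removes `e` from `T ∪ {e}` with
probability `1 - p_e`. As `λ ≤ 1` forces `c ≥ p_e / 2`, one of `c` and `1 - p_e` is at least
`1/3`, and `min(1, x / y) / 3 ≤ x` as soon as `x ≥ 1/3` or `y ≥ 1/3`: take `(x, y) = (c, 1 - p_e)`
for adding `e` and `(x, y) = (1 - p_e, c)` for removing it.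
-/

open Finset
open scoped Classical

noncomputable section

variable {V : Type*} [Fintype V] [DecidableEq V]

/-- The vertex set of the connected component of `v` in the graph `(V, S)`. -/
def compOf (S : Finset (Sym2 V)) (v : V) : Finset V :=
  Finset.univ.filter fun u => (SimpleGraph.fromEdgeSet (↑S : Set (Sym2 V))).Reachable v u

/-- `κ(V,S)`: the set of vertex sets of connected components of the graph `(V, S)`. -/
def kappa (S : Finset (Sym2 V)) : Finset (Finset V) :=
  Finset.univ.image (compOf S)

/-- `∏_{C ∈ κ(V,S)} (1 + ∏_{u ∈ C} λ_u)`. -/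
def clusterProd (S : Finset (Sym2 V)) (lam : V → ℝ) : ℝ :=
  ∏ C ∈ kappa S, (1 + ∏ u ∈ C, lam u)

/-- Weight of an edge subset `S ⊆ E₀` in the weighted random cluster model. -/
def wtWRC (E₀ : Finset (Sym2 V)) (q : Sym2 V → ℝ) (lam : V → ℝ) (S : Finset (Sym2 V)) : ℝ :=
  (∏ e ∈ S, q e) * (∏ f ∈ E₀ \ S, (1 - q f)) * clusterProd S lam

/-- Partition function of the weighted random cluster model. -/
def ZWRC (E₀ : Finset (Sym2 V)) (q : Sym2 V → ℝ) (lam : V → ℝ) : ℝ :=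
  ∑ S ∈ E₀.powerset, wtWRC E₀ q lam S

/-- The weighted random cluster distribution. -/
def piWRC (E₀ : Finset (Sym2 V)) (q : Sym2 V → ℝ) (lam : V → ℝ) (S : Finset (Sym2 V)) : ℝ :=
  wtWRC E₀ q lam S / ZWRC E₀ q lam

/-- The monochromatic edges of a spin configuration `σ`. -/
def monoEdges (E₀ : Finset (Sym2 V)) (σ : V → Bool) : Finset (Sym2 V) :=
  E₀.filter fun e => (e.map σ).IsDiag

/-- Weight of a spin configuration in the Ising model. -/
def wtIsing (E₀ : Finset (Sym2 V)) (β : Sym2 V → ℝ) (lam : V → ℝ) (σ : V → Bool) : ℝ :=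
  (∏ e ∈ monoEdges E₀ σ, β e) * ∏ v : V, (if σ v then lam v else 1)

/-- Ising partition function. -/
def ZIsing (E₀ : Finset (Sym2 V)) (β : Sym2 V → ℝ) (lam : V → ℝ) : ℝ :=
  ∑ σ : V → Bool, wtIsing E₀ β lam σ

/-- Ising Gibbs distribution. -/
def piIsing (E₀ : Finset (Sym2 V)) (β : Sym2 V → ℝ) (lam : V → ℝ) (σ : V → Bool) : ℝ :=
  wtIsing E₀ β lam σ / ZIsing E₀ β lam

/-- Vertices of odd degree in the graph `(V, S)`. -/
def oddVerts (S : Finset (Sym2 V)) : Finset V :=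
  Finset.univ.filter fun v => Odd (S.filter fun e => v ∈ e).card

/-- Weight of an edge subset in the subgraph-world model. -/
def wtSG (E₀ : Finset (Sym2 V)) (p : Sym2 V → ℝ) (η : V → ℝ) (S : Finset (Sym2 V)) : ℝ :=
  (∏ e ∈ S, p e) * (∏ f ∈ E₀ \ S, (1 - p f)) * ∏ v ∈ oddVerts S, η v

/-- Subgraph-world partition function. -/
def ZSG (E₀ : Finset (Sym2 V)) (p : Sym2 V → ℝ) (η : V → ℝ) : ℝ :=
  ∑ S ∈ E₀.powerset, wtSG E₀ p η S

/-- Subgraph-world distribution. -/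
def piSG (E₀ : Finset (Sym2 V)) (p : Sym2 V → ℝ) (η : V → ℝ) (S : Finset (Sym2 V)) : ℝ :=
  wtSG E₀ p η S / ZSG E₀ p η

/-- The transformation `P_{I→R}` from Ising configurations to edge subsets. -/
def PIR (E₀ : Finset (Sym2 V)) (β : Sym2 V → ℝ) (σ : V → Bool) (S : Finset (Sym2 V)) : ℝ :=
  if S ⊆ monoEdges E₀ σ then
    (∏ e ∈ S, (1 - (β e)⁻¹)) * ∏ f ∈ monoEdges E₀ σ \ S, (β f)⁻¹
  else 0

/-- The transformation `P_{R→I}` from edge subsets to Ising configurations. -/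
def PRI (E₀ : Finset (Sym2 V)) (lam : V → ℝ) (S : Finset (Sym2 V)) (σ : V → Bool) : ℝ :=
  if S ⊆ monoEdges E₀ σ then
    ∏ C ∈ kappa S, ((∏ v ∈ C, if σ v then lam v else 1) / (1 + ∏ v ∈ C, lam v))
  else 0

/-- Swendsen-Wang dynamics for the Ising model: `P_{I→R} ⬝ P_{R→I}`. -/
def PSWIsing (E₀ : Finset (Sym2 V)) (β : Sym2 V → ℝ) (lam : V → ℝ) (σ τ : V → Bool) : ℝ :=
  ∑ S ∈ E₀.powerset, PIR E₀ β σ S * PRI E₀ lam S τ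

/-- Swendsen-Wang dynamics for the weighted random cluster model: `P_{R→I} ⬝ P_{I→R}`. -/
def PSWwrc (E₀ : Finset (Sym2 V)) (β : Sym2 V → ℝ) (lam : V → ℝ)
    (S S' : Finset (Sym2 V)) : ℝ :=
  ∑ σ : V → Bool, PRI E₀ lam S σ * PIR E₀ β σ S'

/-- Lazy edge-flipping (Metropolis) dynamics for a distribution `pi` on subsets of `E₀`. -/
def PEF (E₀ : Finset (Sym2 V)) (pi : Finset (Sym2 V) → ℝ) (x y : Finset (Sym2 V)) : ℝ :=
  if x = y then
    1 - (1 / (2 * (E₀.card : ℝ))) * ∑ e ∈ E₀, min 1 (pi (symmDiff x {e}) / pi x)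
  else if (symmDiff x y).card = 1 then
    (1 / (2 * (E₀.card : ℝ))) * min 1 (pi y / pi x)
  else 0

/-- Variance of `f` with respect to a distribution `pi` supported on `states`. -/
def varOn {α : Type*} (states : Finset α) (pi f : α → ℝ) : ℝ :=
  (∑ x ∈ states, pi x * f x ^ 2) - (∑ x ∈ states, pi x * f x) ^ 2

/-- Dirichlet form of a Markov kernel `P` with stationary distribution `pi` on `states`. -/
def dirichletOn {α : Type*} (states : Finset α) (pi : α → ℝ) (P : α → α → ℝ) (f : α → ℝ) : ℝ :=
  ∑ x ∈ states, pi x * f x * (f x - ∑ y ∈ states, P x y * f y)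

/-- Spectral gap of a reversible Markov kernel `P` with stationary distribution `pi`. -/
def gapOn {α : Type*} (states : Finset α) (pi : α → ℝ) (P : α → α → ℝ) : ℝ :=
  sInf ((fun f : α → ℝ => dirichletOn states pi P f / varOn states pi f) ''
    {f | varOn states pi f ≠ 0})

/-- Total variation distance between two distributions on `states`. -/
def dTV {α : Type*} (states : Finset α) (μ ν : α → ℝ) : ℝ :=
  (1 / 2) * ∑ z ∈ states, |μ z - ν z|

/-- `t`-step transition probabilities of the Markov kernel `P` on state space `states`. -/
def kpow {α : Type*} (states : Finset α) (P : α → α → ℝ) : ℕ → α → α → ℝ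
  | 0 => fun x y => if x = y then 1 else 0
  | (t + 1) => fun x y => ∑ z ∈ states, P x z * kpow states P t z y


/-- The endpoints of `e` lie in the same connected component of `(V, S)`. -/
def sameComp (S : Finset (Sym2 V)) (e : Sym2 V) : Prop :=
  ∀ u ∈ e, ∀ v ∈ e, (SimpleGraph.fromEdgeSet (↑S : Set (Sym2 V))).Reachable u v

/-- Probability of adding edge `e` in the single-bond dynamics when its endpoints lie in
different components: `p_e (1 + ∏_{C_u ∪ C_v} λ) / ((1 + ∏_{C_u} λ)(1 + ∏_{C_v} λ))`. -/
def rProb (S : Finset (Sym2 V)) (lam : V → ℝ) (pe : ℝ) (e : Sym2 V) : ℝ :=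
  Sym2.lift ⟨fun u v =>
    pe * (1 + (∏ w ∈ compOf S u, lam w) * (∏ w ∈ compOf S v, lam w)) /
      ((1 + ∏ w ∈ compOf S u, lam w) * (1 + ∏ w ∈ compOf S v, lam w)),
    fun u v => by ring_nf⟩ e

/-- Distribution of the next state in the single-bond dynamics after edge `e` is picked. -/
def sbStep (p : Sym2 V → ℝ) (lam : V → ℝ) (S : Finset (Sym2 V)) (e : Sym2 V)
    (S' : Finset (Sym2 V)) : ℝ :=
  if sameComp S e then
    (if S' = S ∪ {e} then p e else 0) + (if S' = S \ {e} then 1 - p e else 0)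
  else
    (if S' = S ∪ {e} then rProb S lam (p e) e else 0) +
      (if S' = S then 1 - rProb S lam (p e) e else 0)

/-- The lazy single-bond dynamics for the weighted random cluster model: with probability
`1/2` stay put, otherwise pick a uniform random edge and resample it. -/
def PSB (E₀ : Finset (Sym2 V)) (p : Sym2 V → ℝ) (lam : V → ℝ)
    (S S' : Finset (Sym2 V)) : ℝ :=
  (if S = S' then (1 : ℝ) / 2 else 0) +
    (1 / (2 * (E₀.card : ℝ))) * ∑ e ∈ E₀, sbStep p lam S e S'

local notation "Γ" S:max => SimpleGraph.fromEdgeSet (SetLike.coe S)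

lemma Finset.symmDiff_eq_singleton {α : Type*} [DecidableEq α] {s t : Finset α} {a : α}
    (h : symmDiff s t = {a}) : (a ∉ s ∧ t = s ∪ {a}) ∨ (a ∉ t ∧ s = t ∪ {a}) := by
  have hmem : ∀ x, (x ∈ s ∧ x ∉ t ∨ x ∈ t ∧ x ∉ s) ↔ x = a := fun x => by
    simpa only [Finset.mem_symmDiff, Finset.mem_singleton] using Finset.ext_iff.mp h x
  have hst : ∀ x, x ≠ a → (x ∈ s ↔ x ∈ t) := fun x hx => by
    have := hmem x
    tauto
  have hunion : ∀ {s t : Finset α}, a ∈ t → (∀ x, x ≠ a → (x ∈ s ↔ x ∈ t)) →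
      t = s ∪ {a} := fun hat hst => Finset.ext fun x => by
    by_cases hx : x = a
    · simp [hx, hat]
    · simp [hx, hst x hx]
  by_cases ha : a ∈ s
  · have hat : a ∉ t := by simpa [ha] using hmem a
    exact Or.inr ⟨hat, hunion ha fun x hx => (hst x hx).symm⟩
  · have hat : a ∈ t := by simpa [ha] using hmem a
    exact Or.inl ⟨ha, hunion hat hst⟩

lemma Finset.union_singleton_ne_sdiff {α : Type*} [DecidableEq α] (s : Finset α) (a : α) :
    s ∪ {a} ≠ s \ {a} := fun h =>
  Finset.notMem_sdiff_of_mem_right (Finset.mem_singleton_self a)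
    (h ▸ Finset.mem_union_right s (Finset.mem_singleton_self a))

lemma one_add_prod_pos {ι : Type*} {f : ι → ℝ} (hf : ∀ i, 0 ≤ f i) (s : Finset ι) :
    0 < 1 + ∏ i ∈ s, f i := by
  have := Finset.prod_nonneg fun i (_ : i ∈ s) => hf i
  linarith

lemma min_one_div_div_three_le {x y : ℝ} (hx : 0 ≤ x) (hy : 0 < y) (h : 1 / 3 ≤ x ∨ 1 / 3 ≤ y) :
    min 1 (x / y) / 3 ≤ x := by
  rcases h with h | h
  · linarith [min_le_left 1 (x / y)]
  · have : x / y ≤ 3 * x := (div_le_iff₀ hy).mpr (by nlinarith)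
    linarith [min_le_right 1 (x / y)]

section Components

open SimpleGraph

variable {S : Finset (Sym2 V)} {u v w x : V}

lemma mem_compOf : x ∈ compOf S v ↔ (Γ S).Reachable v x := by
  simp [compOf]

lemma compOf_eq_compOf_iff : compOf S v = compOf S w ↔ (Γ S).Reachable v w := by
  refine ⟨fun h => mem_compOf.mp (h ▸ mem_compOf.mpr (Reachable.refl w)), fun h => ?_⟩
  ext x
  simp only [mem_compOf]
  exact ⟨h.symm.trans, h.trans⟩

lemma compOf_mem_kappa (S : Finset (Sym2 V)) (v : V) : compOf S v ∈ kappa S :=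
  Finset.mem_image_of_mem _ (Finset.mem_univ v)

omit [Fintype V] in
lemma reachable_union_edge_iff (hne : u ≠ v) {a b : V} :
    (Γ (S ∪ {s(u, v)})).Reachable a b ↔
      (Γ S).Reachable a b ∨ ((Γ S).Reachable a u ∧ (Γ S).Reachable v b) ∨
        ((Γ S).Reachable a v ∧ (Γ S).Reachable u b) := by
  have hle : Γ S ≤ Γ (S ∪ {s(u, v)}) := fromEdgeSet_mono (by simp)
  have huv : (Γ (S ∪ {s(u, v)})).Adj u v := (fromEdgeSet_adj _).mpr ⟨by simp, hne⟩
  constructor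
  · rintro ⟨walk⟩
    induction walk with
    | nil => exact Or.inl (Reachable.refl _)
    | @cons x z y hxz _ ih =>
      obtain ⟨hxz, hne'⟩ := (fromEdgeSet_adj _).mp hxz
      simp only [Finset.coe_union, Finset.coe_singleton, Set.mem_union, Set.mem_singleton_iff,
        Sym2.eq_iff, Finset.mem_coe] at hxz
      rcases hxz with hxz | ⟨rfl, rfl⟩ | ⟨rfl, rfl⟩
      · have hxz : (Γ S).Reachable x z := ((fromEdgeSet_adj _).mpr ⟨hxz, hne'⟩).reachable
        rcases ih with h | ⟨h₁, h₂⟩ | ⟨h₁, h₂⟩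
        exacts [Or.inl (hxz.trans h), Or.inr (Or.inl ⟨hxz.trans h₁, h₂⟩),
          Or.inr (Or.inr ⟨hxz.trans h₁, h₂⟩)]
      · rcases ih with h | ⟨h₁, h₂⟩ | ⟨_, h₂⟩
        exacts [Or.inr (Or.inl ⟨Reachable.refl _, h⟩), Or.inl (h₁.symm.trans h₂), Or.inl h₂]
      · rcases ih with h | ⟨_, h₂⟩ | ⟨h₁, h₂⟩
        exacts [Or.inr (Or.inr ⟨Reachable.refl _, h⟩), Or.inl h₂, Or.inl (h₁.symm.trans h₂)]
  · rintro (h | ⟨h₁, h₂⟩ | ⟨h₁, h₂⟩)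
    · exact h.mono hle
    · exact ((h₁.mono hle).trans huv.reachable).trans (h₂.mono hle)
    · exact ((h₁.mono hle).trans huv.symm.reachable).trans (h₂.mono hle)

lemma compOf_union_of_reachable (hne : u ≠ v) (huv : (Γ S).Reachable u v) :
    compOf (S ∪ {s(u, v)}) = compOf S := by
  ext w x
  simp only [mem_compOf, reachable_union_edge_iff hne]
  refine ⟨?_, Or.inl⟩
  rintro (h | ⟨h₁, h₂⟩ | ⟨h₁, h₂⟩)
  exacts [h, (h₁.trans huv).trans h₂, (h₁.trans huv.symm).trans h₂]

lemma clusterProd_union_of_reachable (hne : u ≠ v) (huv : (Γ S).Reachable u v)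
    (lam : V → ℝ) : clusterProd (S ∪ {s(u, v)}) lam = clusterProd S lam := by
  simp only [clusterProd, kappa, compOf_union_of_reachable hne huv]

lemma compOf_union_of_not_reachable (hne : u ≠ v) (huv : ¬ (Γ S).Reachable u v) (w : V) :
    compOf (S ∪ {s(u, v)}) w =
      if (Γ S).Reachable w u ∨ (Γ S).Reachable w v then compOf S u ∪ compOf S v
      else compOf S w := by
  ext x
  simp only [mem_compOf, reachable_union_edge_iff hne]
  split_ifs with hw
  · simp only [Finset.mem_union, mem_compOf]
    rcases hw with hw | hw
    · refine ⟨?_, ?_⟩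
      · rintro (h | ⟨_, h⟩ | ⟨h, _⟩)
        exacts [Or.inl (hw.symm.trans h), Or.inr h, absurd (hw.symm.trans h) huv]
      · rintro (h | h)
        exacts [Or.inl (hw.trans h), Or.inr (Or.inl ⟨hw, h⟩)]
    · refine ⟨?_, ?_⟩
      · rintro (h | ⟨h, _⟩ | ⟨_, h⟩)
        exacts [Or.inr (hw.symm.trans h), absurd (hw.symm.trans h) (huv ·.symm), Or.inl h]
      · rintro (h | h)
        exacts [Or.inr (Or.inr ⟨hw, h⟩), Or.inl (hw.trans h)]
  · rw [not_or] at hw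
    rw [mem_compOf]
    refine ⟨?_, Or.inl⟩
    rintro (h | ⟨h, _⟩ | ⟨h, _⟩)
    exacts [h, absurd h hw.1, absurd h hw.2]

lemma kappa_union_of_not_reachable (hne : u ≠ v) (huv : ¬ (Γ S).Reachable u v) :
    kappa (S ∪ {s(u, v)}) =
      insert (compOf S u ∪ compOf S v) (((kappa S).erase (compOf S u)).erase (compOf S v)) := by
  ext C
  simp only [kappa, Finset.mem_image, Finset.mem_univ, true_and, Finset.mem_insert,
    Finset.mem_erase, compOf_union_of_not_reachable hne huv]
  constructor
  · rintro ⟨w, rfl⟩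
    split_ifs with hw
    · exact Or.inl rfl
    · rw [not_or] at hw
      exact Or.inr ⟨mt compOf_eq_compOf_iff.mp hw.2, mt compOf_eq_compOf_iff.mp hw.1, w, rfl⟩
  · rintro (rfl | ⟨hv, hu, w, rfl⟩)
    · exact ⟨u, if_pos (Or.inl (Reachable.refl u))⟩
    · refine ⟨w, if_neg ?_⟩
      rintro (h | h)
      exacts [hu (compOf_eq_compOf_iff.mpr h), hv (compOf_eq_compOf_iff.mpr h)]

lemma clusterProd_union_mul_of_not_reachable (hne : u ≠ v) (huv : ¬ (Γ S).Reachable u v)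
    (lam : V → ℝ) :
    clusterProd (S ∪ {s(u, v)}) lam *
        ((1 + ∏ w ∈ compOf S u, lam w) * (1 + ∏ w ∈ compOf S v, lam w)) =
      clusterProd S lam * (1 + (∏ w ∈ compOf S u, lam w) * (∏ w ∈ compOf S v, lam w)) := by
  have hmerged : compOf S u ∪ compOf S v ∉ ((kappa S).erase (compOf S u)).erase (compOf S v) := by
    simp only [Finset.mem_erase, kappa, Finset.mem_image, Finset.mem_univ, true_and, not_and]
    rintro - hCu ⟨w, hw⟩
    have hu : u ∈ compOf S w := hw ▸ Finset.mem_union_left _ (mem_compOf.mpr (Reachable.refl u))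
    exact hCu (hw ▸ compOf_eq_compOf_iff.mpr (mem_compOf.mp hu))
  have hdisj : Disjoint (compOf S u) (compOf S v) := Finset.disjoint_left.mpr fun x hu hv =>
    huv ((mem_compOf.mp hu).trans (mem_compOf.mp hv).symm)
  have hv : compOf S v ∈ (kappa S).erase (compOf S u) :=
    Finset.mem_erase.mpr ⟨mt compOf_eq_compOf_iff.mp (huv ·.symm), compOf_mem_kappa S v⟩
  unfold clusterProd
  rw [kappa_union_of_not_reachable hne huv, Finset.prod_insert hmerged,
    Finset.prod_union hdisj, ← Finset.mul_prod_erase _ _ (compOf_mem_kappa S u),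
    ← Finset.mul_prod_erase _ _ hv]
  ring

end Components

section Weights

variable {E₀ S T : Finset (Sym2 V)} {q : Sym2 V → ℝ} {lam : V → ℝ} {e : Sym2 V}

lemma clusterProd_pos (hlam₀ : ∀ x, 0 ≤ lam x) : 0 < clusterProd S lam :=
  Finset.prod_pos fun C _ => one_add_prod_pos hlam₀ C

lemma wtWRC_pos (hq : ∀ f ∈ E₀, 0 < q f ∧ q f < 1) (hlam₀ : ∀ x, 0 ≤ lam x) (hS : S ⊆ E₀) :
    0 < wtWRC E₀ q lam S := by
  refine mul_pos (mul_pos ?_ ?_) (clusterProd_pos hlam₀)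
  · exact Finset.prod_pos fun f hf => (hq f (hS hf)).1
  · exact Finset.prod_pos fun f hf => sub_pos.mpr (hq f (Finset.mem_sdiff.mp hf).1).2

lemma ZWRC_pos (hq : ∀ f ∈ E₀, 0 < q f ∧ q f < 1) (hlam₀ : ∀ x, 0 ≤ lam x) :
    0 < ZWRC E₀ q lam :=
  Finset.sum_pos (fun _ hS => wtWRC_pos hq hlam₀ (Finset.mem_powerset.mp hS))
    ⟨∅, Finset.empty_mem_powerset E₀⟩

lemma wtWRC_union_mul (he : e ∈ E₀) (heT : e ∉ T) :
    wtWRC E₀ q lam (T ∪ {e}) * (1 - q e) * clusterProd T lam =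
      wtWRC E₀ q lam T * q e * clusterProd (T ∪ {e}) lam := by
  have hE : E₀ \ T = insert e (E₀ \ (T ∪ {e})) := by
    rw [Finset.union_singleton, Finset.sdiff_insert,
      Finset.insert_erase (Finset.mem_sdiff.mpr ⟨he, heT⟩)]
  have he' : e ∉ E₀ \ (T ∪ {e}) := by simp
  unfold wtWRC
  rw [hE, Finset.prod_insert he', Finset.union_singleton, Finset.prod_insert heT]
  ring

end Weights

section SingleBond

open SimpleGraph

variable {E₀ S T : Finset (Sym2 V)} {q : Sym2 V → ℝ} {lam : V → ℝ} {e : Sym2 V} {u v : V}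

lemma rProb_mk (S : Finset (Sym2 V)) (lam : V → ℝ) (pe : ℝ) (u v : V) :
    rProb S lam pe s(u, v) =
      pe * (1 + (∏ w ∈ compOf S u, lam w) * (∏ w ∈ compOf S v, lam w)) /
        ((1 + ∏ w ∈ compOf S u, lam w) * (1 + ∏ w ∈ compOf S v, lam w)) := rfl

lemma rProb_mem_Icc (hlam₀ : ∀ x, 0 ≤ lam x) {pe : ℝ} (hpe : pe ∈ Set.Icc 0 1)
    (S : Finset (Sym2 V)) (e : Sym2 V) : rProb S lam pe e ∈ Set.Icc 0 1 := by
  induction e using Sym2.ind with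
  | h u v =>
    have ha := Finset.prod_nonneg fun x (_ : x ∈ compOf S u) => hlam₀ x
    have hb := Finset.prod_nonneg fun x (_ : x ∈ compOf S v) => hlam₀ x
    rw [rProb_mk]
    refine ⟨by have := hpe.1; positivity, (div_le_one (by positivity)).mpr ?_⟩
    calc pe * (1 + (∏ w ∈ compOf S u, lam w) * ∏ w ∈ compOf S v, lam w)
        ≤ 1 + (∏ w ∈ compOf S u, lam w) * ∏ w ∈ compOf S v, lam w :=
          mul_le_of_le_one_left (by positivity) hpe.2
      _ ≤ _ := by nlinarith

lemma sbStep_nonneg (hqe : q e ∈ Set.Icc 0 1) (hlam₀ : ∀ x, 0 ≤ lam x) (S S' : Finset (Sym2 V)) :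
    0 ≤ sbStep q lam S e S' := by
  have := rProb_mem_Icc hlam₀ hqe S e
  simp only [Set.mem_Icc] at hqe this
  unfold sbStep
  split_ifs <;> linarith

omit [Fintype V] [DecidableEq V] in
lemma sameComp_mk : sameComp S s(u, v) ↔ (Γ S).Reachable u v := by
  refine ⟨fun h => h u (Sym2.mem_mk_left u v) v (Sym2.mem_mk_right u v), fun h x hx y hy => ?_⟩
  rcases Sym2.mem_iff.mp hx with rfl | rfl <;> rcases Sym2.mem_iff.mp hy with rfl | rfl
  exacts [Reachable.refl _, h, h.symm, Reachable.refl _]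

lemma sbStep_union_of_reachable (huv : (Γ T).Reachable u v) :
    sbStep q lam T s(u, v) (T ∪ {s(u, v)}) = q s(u, v) := by
  rw [sbStep, if_pos (sameComp_mk.mpr huv), if_pos rfl,
    if_neg (Finset.union_singleton_ne_sdiff _ _), add_zero]

lemma sbStep_union_of_not_reachable (heT : s(u, v) ∉ T) (huv : ¬ (Γ T).Reachable u v) :
    sbStep q lam T s(u, v) (T ∪ {s(u, v)}) = rProb T lam (q s(u, v)) s(u, v) := by
  have hne : T ∪ {s(u, v)} ≠ T := fun h =>
    heT (h ▸ Finset.mem_union_right T (Finset.mem_singleton_self _))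
  rw [sbStep, if_neg (mt sameComp_mk.mp huv), if_pos rfl, if_neg hne, add_zero]

lemma sbStep_union_sdiff (hne : u ≠ v) (heT : s(u, v) ∉ T) :
    sbStep q lam (T ∪ {s(u, v)}) s(u, v) T = 1 - q s(u, v) := by
  have hsame : sameComp (T ∪ {s(u, v)}) s(u, v) :=
    sameComp_mk.mpr ((fromEdgeSet_adj _).mpr ⟨by simp, hne⟩).reachable
  have hT : T = (T ∪ {s(u, v)}) \ {s(u, v)} := by
    rw [Finset.union_sdiff_right, Finset.sdiff_singleton_eq_erase, Finset.erase_eq_of_notMem heT]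
  have hadd : T ≠ T ∪ {s(u, v)} ∪ {s(u, v)} := fun h =>
    heT (h ▸ Finset.mem_union_right _ (Finset.mem_singleton_self _))
  rw [sbStep, if_pos hsame, if_neg hadd, if_pos hT, zero_add]

lemma half_le_sbStep_union (hqe : 0 ≤ q s(u, v)) (hlam₀ : ∀ x, 0 ≤ lam x)
    (hlam₁ : ∀ x, lam x ≤ 1) (heT : s(u, v) ∉ T) :
    q s(u, v) / 2 ≤ sbStep q lam T s(u, v) (T ∪ {s(u, v)}) := by
  by_cases huv : (Γ T).Reachable u v
  · rw [sbStep_union_of_reachable huv]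
    linarith
  · have ha := Finset.prod_nonneg fun x (_ : x ∈ compOf T u) => hlam₀ x
    have hb := Finset.prod_nonneg fun x (_ : x ∈ compOf T v) => hlam₀ x
    rw [sbStep_union_of_not_reachable heT huv, rProb_mk,
      div_le_div_iff₀ two_pos (mul_pos (by linarith) (by linarith))]
    have ha₁ := Finset.prod_le_one (fun x (_ : x ∈ compOf T u) => hlam₀ x) fun x _ => hlam₁ x
    have hb₁ := Finset.prod_le_one (fun x (_ : x ∈ compOf T v) => hlam₀ x) fun x _ => hlam₁ x
    nlinarith [mul_nonneg hqe (mul_nonneg (sub_nonneg.mpr ha₁) (sub_nonneg.mpr hb₁))]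

lemma mul_clusterProd_union (hlam₀ : ∀ x, 0 ≤ lam x) (hne : u ≠ v) (heT : s(u, v) ∉ T) :
    q s(u, v) * clusterProd (T ∪ {s(u, v)}) lam =
      sbStep q lam T s(u, v) (T ∪ {s(u, v)}) * clusterProd T lam := by
  by_cases huv : (Γ T).Reachable u v
  · rw [sbStep_union_of_reachable huv, clusterProd_union_of_reachable hne huv]
  · have hmerge := clusterProd_union_mul_of_not_reachable hne huv lam
    have ha := one_add_prod_pos hlam₀ (compOf T u)
    have hb := one_add_prod_pos hlam₀ (compOf T v)
    rw [sbStep_union_of_not_reachable heT huv, rProb_mk, div_mul_eq_mul_div,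
      eq_div_iff (by positivity), mul_assoc, hmerge]
    ring

lemma wtWRC_union_mul_one_sub (hlam₀ : ∀ x, 0 ≤ lam x) (he : s(u, v) ∈ E₀) (hne : u ≠ v)
    (heT : s(u, v) ∉ T) :
    wtWRC E₀ q lam (T ∪ {s(u, v)}) * (1 - q s(u, v)) =
      wtWRC E₀ q lam T * sbStep q lam T s(u, v) (T ∪ {s(u, v)}) := by
  refine mul_right_cancel₀ (clusterProd_pos hlam₀ (S := T)).ne' ?_
  rw [wtWRC_union_mul he heT, mul_assoc, mul_clusterProd_union hlam₀ hne heT]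
  ring

lemma piWRC_union_div (hq : ∀ f ∈ E₀, 0 < q f ∧ q f < 1) (hlam₀ : ∀ x, 0 ≤ lam x)
    (hT : T ⊆ E₀) (he : s(u, v) ∈ E₀) (hne : u ≠ v) (heT : s(u, v) ∉ T) :
    piWRC E₀ q lam (T ∪ {s(u, v)}) / piWRC E₀ q lam T =
      sbStep q lam T s(u, v) (T ∪ {s(u, v)}) / (1 - q s(u, v)) := by
  rw [piWRC, piWRC, div_div_div_cancel_right₀ (ZWRC_pos hq hlam₀).ne',
    div_eq_div_iff (wtWRC_pos hq hlam₀ hT).ne' (sub_pos.mpr (hq _ he).2).ne',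
    wtWRC_union_mul_one_sub hlam₀ he hne heT, mul_comm]

end SingleBond

section EdgeFlip

variable {E₀ T : Finset (Sym2 V)} {q : Sym2 V → ℝ} {lam : V → ℝ} {u v : V}

lemma third_le_sbStep_union_or (hq : 0 ≤ q s(u, v)) (hlam₀ : ∀ x, 0 ≤ lam x)
    (hlam₁ : ∀ x, lam x ≤ 1) (heT : s(u, v) ∉ T) :
    1 / 3 ≤ sbStep q lam T s(u, v) (T ∪ {s(u, v)}) ∨ 1 / 3 ≤ 1 - q s(u, v) := by
  have := half_le_sbStep_union hq hlam₀ hlam₁ heT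
  by_contra! h
  linarith [h.1, h.2]

lemma min_piWRC_union_div_le_sbStep (hq : ∀ f ∈ E₀, 0 < q f ∧ q f < 1)
    (hlam₀ : ∀ x, 0 ≤ lam x) (hlam₁ : ∀ x, lam x ≤ 1) (hT : T ⊆ E₀) (he : s(u, v) ∈ E₀)
    (hne : u ≠ v) (heT : s(u, v) ∉ T) :
    min 1 (piWRC E₀ q lam (T ∪ {s(u, v)}) / piWRC E₀ q lam T) / 3 ≤
      sbStep q lam T s(u, v) (T ∪ {s(u, v)}) := by
  obtain ⟨hq₀, hq₁⟩ := hq _ he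
  rw [piWRC_union_div hq hlam₀ hT he hne heT]
  exact min_one_div_div_three_le (by linarith [half_le_sbStep_union hq₀.le hlam₀ hlam₁ heT])
    (sub_pos.mpr hq₁) (third_le_sbStep_union_or hq₀.le hlam₀ hlam₁ heT)

lemma min_piWRC_div_union_le_sbStep (hq : ∀ f ∈ E₀, 0 < q f ∧ q f < 1)
    (hlam₀ : ∀ x, 0 ≤ lam x) (hlam₁ : ∀ x, lam x ≤ 1) (hT : T ⊆ E₀) (he : s(u, v) ∈ E₀)
    (hne : u ≠ v) (heT : s(u, v) ∉ T) :
    min 1 (piWRC E₀ q lam T / piWRC E₀ q lam (T ∪ {s(u, v)})) / 3 ≤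
      sbStep q lam (T ∪ {s(u, v)}) s(u, v) T := by
  obtain ⟨hq₀, hq₁⟩ := hq _ he
  rw [← inv_div (piWRC E₀ q lam (T ∪ {s(u, v)})), piWRC_union_div hq hlam₀ hT he hne heT,
    inv_div, sbStep_union_sdiff hne heT]
  exact min_one_div_div_three_le (sub_pos.mpr hq₁).le
    (by linarith [half_le_sbStep_union hq₀.le hlam₀ hlam₁ heT])
    (third_le_sbStep_union_or hq₀.le hlam₀ hlam₁ heT).symm

end EdgeFlip

/-- Comparison of the single-bond and edge-flipping dynamics for the weighted random cluster
model: `P_SB(S,S') ≥ P_EF(S,S')/3` for all states `S ≠ S'`. -/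
theorem single_bond_vs_edge_flip {V : Type*} [Fintype V] [DecidableEq V]
    (G : SimpleGraph V) [DecidableRel G.Adj]
    (p : Sym2 V → ℝ) (lam : V → ℝ)
    (hp : ∀ e ∈ G.edgeFinset, 0 < p e ∧ p e < 1)
    (hlam : ∀ v : V, 0 < lam v ∧ lam v ≤ 1) :
    ∀ S ∈ G.edgeFinset.powerset, ∀ S' ∈ G.edgeFinset.powerset, S ≠ S' →
      PSB G.edgeFinset p lam S S' ≥
        PEF G.edgeFinset (piWRC G.edgeFinset p lam) S S' / 3 := by
  intro S hS S' hS' hSS'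
  rw [Finset.mem_powerset] at hS hS'
  have hlam₀ : ∀ v, 0 ≤ lam v := fun v => (hlam v).1.le
  have hlam₁ : ∀ v, lam v ≤ 1 := fun v => (hlam v).2
  have hstep : ∀ e ∈ G.edgeFinset, 0 ≤ sbStep p lam S e S' := fun e he =>
    sbStep_nonneg ⟨(hp e he).1.le, (hp e he).2.le⟩ hlam₀ S S'
  have hrate : 0 ≤ 1 / (2 * (G.edgeFinset.card : ℝ)) := by positivity
  rw [ge_iff_le, PSB, PEF, if_neg hSS', if_neg hSS', zero_add]
  split_ifs with hcard
  · obtain ⟨e, hSS'e⟩ := Finset.card_eq_one.mp hcard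
    have heE : e ∈ G.edgeFinset := Finset.union_subset hS hS'
      (Finset.symmDiff_subset_union (hSS'e ▸ Finset.mem_singleton_self e))
    have hflip : min 1 (piWRC G.edgeFinset p lam S' / piWRC G.edgeFinset p lam S) / 3 ≤
        sbStep p lam S e S' := by
      induction e using Sym2.ind with
      | h u v =>
        have hne : u ≠ v := G.ne_of_adj (SimpleGraph.mem_edgeFinset.mp heE)
        rcases Finset.symmDiff_eq_singleton hSS'e with ⟨heS, rfl⟩ | ⟨heS', rfl⟩
        · exact min_piWRC_union_div_le_sbStep hp hlam₀ hlam₁ hS heE hne heS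
        · exact min_piWRC_div_union_le_sbStep hp hlam₀ hlam₁ hS' heE hne heS'
    rw [mul_div_assoc]
    exact mul_le_mul_of_nonneg_left (hflip.trans (Finset.single_le_sum hstep heE)) hrate
  · rw [zero_div]
    exact mul_nonneg hrate (Finset.sum_nonneg hstep)
end
end

section
/- Let G=(V,E) be a finite simple undirected graph with β_e > 1 for all e ∈ E and 0 < λ_v ≤ 1 for all v ∈ V, and let the weighted random cluster model have edge parameters p_e = 1 − 1/β_e and vertex weights λ. Let P_SW^wrc = P_{R→I}·P_{I→R} be the Swendsen-Wang dynamics for the weighted random cluster model, and let P_EF be the lazy edge-flipping (Metropolis) dynamics for π_wrc. Then Gap(P_SW^wrc) ≥ Gap(P_EF)/3. -/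
open Finset
open scoped Classical

noncomputable section

variable {V : Type*} [Fintype V] [DecidableEq V]

/-!
Through the Edwards–Sokal coupling `π_wrc(S) P_{R→I}(S, σ) = π_Ising(σ) P_{I→R}(σ, S)`, the
Dirichlet form of `P_{R→I} P_{I→R}` is `E_{π_Ising}[Var_{P_{I→R}(σ, ·)} f]`. The row
`P_{I→R}(σ, ·)` keeps every monochromatic edge independently with probability `1 - 1/β_e`, so its
variance dominates the conditional variance in a single edge `e`; averaging over `σ` gives
`D_SW(f) ≥ β_e⁻¹ ∑_{S ∌ e} π(S + e) (f S - f (S + e))²`.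
On the other side, recolouring a cluster from `true` to `false` never decreases the spin weight
when `λ ≤ 1`; this shows that adding an edge loses at most a factor `3` of cluster weight,
`(β_e - 1) π(S) ≤ 3 π(S + e)`, hence
`β_e min (π S) (π (S + e)) ≤ 6 π(S + e)`. Summing over the `m` edges of the edge-flip Dirichlet
form `(2m)⁻¹ ∑_e ∑_{S ∌ e} min (π S) (π (S + e)) (f S - f (S + e))²` yields `D_EF ≤ 3 D_SW`.
-/

section MarkovChain

variable {α γ : Type*}

theorem varOn_nonneg {s : Finset α} {π : α → ℝ} (hπ : ∀ x ∈ s, 0 ≤ π x)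
    (hsum : ∑ x ∈ s, π x = 1) (f : α → ℝ) : 0 ≤ varOn s π f := by
  have h := sum_sq_le_sum_mul_sum_of_sq_le_mul s hπ
    (fun x hx => mul_nonneg (hπ x hx) (sq_nonneg (f x))) (r := fun x => π x * f x)
    (fun x _ => le_of_eq (by ring))
  rw [hsum, one_mul] at h
  unfold varOn
  linarith

theorem dirichletOn_comp_eq_sum_varOn {s : Finset α} {t : Finset γ} {π : α → ℝ} {μ : γ → ℝ}
    {A : α → γ → ℝ} {B : γ → α → ℝ} (hA : ∀ x ∈ s, ∑ y ∈ t, A x y = 1)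
    (hAB : ∀ x ∈ s, ∀ y ∈ t, π x * A x y = μ y * B y x) (f : α → ℝ) :
    dirichletOn s π (fun x x' => ∑ y ∈ t, A x y * B y x') f =
      ∑ y ∈ t, μ y * varOn s (B y) f := by
  set Bf : γ → ℝ := fun y => ∑ x ∈ s, B y x * f x
  have hmarg : ∀ x ∈ s, ∑ y ∈ t, μ y * B y x = π x := fun x hx => by
    rw [← sum_congr rfl fun y hy => hAB x hx y hy, ← mul_sum, hA x hx, mul_one]
  have hrow : ∀ x, ∑ x' ∈ s, (∑ y ∈ t, A x y * B y x') * f x' = ∑ y ∈ t, A x y * Bf y := by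
    intro x
    simp only [Bf, sum_mul, mul_sum, mul_assoc]
    exact sum_comm
  have hcross : ∑ x ∈ s, π x * f x * ∑ y ∈ t, A x y * Bf y = ∑ y ∈ t, μ y * Bf y ^ 2 := by
    calc _ = ∑ y ∈ t, ∑ x ∈ s, π x * A x y * (f x * Bf y) := by
          simp only [mul_sum]
          rw [sum_comm]
          exact sum_congr rfl fun y _ => sum_congr rfl fun x _ => by ring
      _ = ∑ y ∈ t, μ y * Bf y ^ 2 := by
          refine sum_congr rfl fun y hy => ?_
          calc _ = ∑ x ∈ s, μ y * (B y x * f x) * Bf y :=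
                sum_congr rfl fun x hx => by rw [hAB x hx y hy]; ring
            _ = μ y * Bf y ^ 2 := by rw [← sum_mul, ← mul_sum]; ring
  have hsq : ∑ y ∈ t, μ y * ∑ x ∈ s, B y x * f x ^ 2 = ∑ x ∈ s, π x * f x ^ 2 := by
    simp only [mul_sum]
    rw [sum_comm]
    refine sum_congr rfl fun x hx => ?_
    rw [← hmarg x hx, sum_mul]
    exact sum_congr rfl fun y _ => by ring
  unfold dirichletOn varOn
  simp only [hrow]
  calc _ = ∑ x ∈ s, π x * f x ^ 2 - ∑ x ∈ s, π x * f x * ∑ y ∈ t, A x y * Bf y := by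
        rw [← sum_sub_distrib]
        exact sum_congr rfl fun x _ => by ring
    _ = _ := by
        rw [hcross, ← hsq, ← sum_sub_distrib]
        exact sum_congr rfl fun y _ => by ring

theorem gapOn_div_le_gapOn {s : Finset α} {π : α → ℝ} {P Q : α → α → ℝ} {c : ℝ} (hc : 0 < c)
    (hvar : ∀ f, 0 ≤ varOn s π f) (hP : ∀ f, 0 ≤ dirichletOn s π P f)
    (hPQ : ∀ f, dirichletOn s π P f ≤ c * dirichletOn s π Q f) :
    gapOn s π P / c ≤ gapOn s π Q := by
  unfold gapOn
  rcases Set.eq_empty_or_nonempty {f : α → ℝ | varOn s π f ≠ 0} with hF | hF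
  · simp [hF]
  refine le_csInf (hF.image _) ?_
  rintro _ ⟨f, hf, rfl⟩
  have hv : 0 < varOn s π f := (hvar f).lt_of_ne (Ne.symm hf)
  have hbdd : BddBelow ((fun f => dirichletOn s π P f / varOn s π f) ''
      {f | varOn s π f ≠ 0}) := by
    refine ⟨0, ?_⟩
    rintro _ ⟨g, hg, rfl⟩
    exact div_nonneg (hP g) (hvar g)
  calc _ ≤ dirichletOn s π P f / varOn s π f / c := by
        gcongr
        exact csInf_le hbdd ⟨f, hf, rfl⟩
    _ = dirichletOn s π P f / c / varOn s π f := div_right_comm _ _ _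
    _ ≤ dirichletOn s π Q f / varOn s π f := by
        gcongr
        rw [div_le_iff₀' hc]
        exact hPQ f

end MarkovChain

section Pairing

variable {α : Type*} [DecidableEq α] {E : Finset α} {e : α}

theorem sum_powerset_eq_sum_powerset_erase (he : e ∈ E) {M : Type*} [AddCommMonoid M]
    (F : Finset α → M) :
    ∑ S ∈ E.powerset, F S = ∑ S ∈ (E.erase e).powerset, (F S + F (insert e S)) := by
  conv_lhs => rw [← insert_erase he]
  rw [sum_powerset_insert (notMem_erase e E), sum_add_distrib]

theorem notMem_of_mem_powerset_erase {S : Finset α} (hS : S ∈ (E.erase e).powerset) : e ∉ S :=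
  fun h => notMem_erase e E (mem_powerset.1 hS h)

theorem subset_of_mem_powerset_erase {S : Finset α} (hS : S ∈ (E.erase e).powerset) : S ⊆ E :=
  (mem_powerset.1 hS).trans (erase_subset e E)

theorem mul_sq_add_mul_sq {a b : ℝ} (ha : 0 ≤ a) (hb : 0 ≤ b) (x y : ℝ) :
    a * x ^ 2 + b * y ^ 2 = (a * x + b * y) ^ 2 / (a + b) + a * b / (a + b) * (x - y) ^ 2 := by
  rcases (add_nonneg ha hb).eq_or_lt with hab | hab
  · obtain ⟨rfl, rfl⟩ : a = 0 ∧ b = 0 := ⟨by linarith, by linarith⟩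
    simp
  · field_simp
    ring

/-- Law of total variance for the partition into pairs `{S, insert e S}`: the summand on the
left is the variance of `f` within a pair. -/
theorem sum_pair_le_varOn (he : e ∈ E) {w : Finset α → ℝ} (hw : ∀ S ∈ E.powerset, 0 ≤ w S)
    (hsum : ∑ S ∈ E.powerset, w S = 1) (f : Finset α → ℝ) :
    ∑ S ∈ (E.erase e).powerset,
        w S * w (insert e S) / (w S + w (insert e S)) * (f S - f (insert e S)) ^ 2 ≤
      varOn E.powerset w f := by
  have hw₀ : ∀ S ∈ (E.erase e).powerset, 0 ≤ w S := fun S hS =>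
    hw S (mem_powerset.2 (subset_of_mem_powerset_erase hS))
  have hw₁ : ∀ S ∈ (E.erase e).powerset, 0 ≤ w (insert e S) := fun S hS =>
    hw _ (mem_powerset.2 (insert_subset he (subset_of_mem_powerset_erase hS)))
  have hc : ∀ S ∈ (E.erase e).powerset, 0 ≤ w S + w (insert e S) := fun S hS =>
    add_nonneg (hw₀ S hS) (hw₁ S hS)
  have hmean := sum_sq_le_sum_mul_sum_of_sq_le_mul (E.erase e).powerset hc
    (g := fun S => (w S * f S + w (insert e S) * f (insert e S)) ^ 2 / (w S + w (insert e S)))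
    (r := fun S => w S * f S + w (insert e S) * f (insert e S))
    (fun S hS => div_nonneg (sq_nonneg _) (hc S hS)) (fun S hS => by
      rcases (hc S hS).eq_or_lt with h | h
      · obtain ⟨h₀, h₁⟩ : w S = 0 ∧ w (insert e S) = 0 := by
          have := hw₀ S hS; have := hw₁ S hS; constructor <;> linarith
        simp [h₀, h₁]
      · rw [mul_div_cancel₀ _ h.ne'])
  rw [← sum_powerset_eq_sum_powerset_erase he w, hsum, one_mul,
    ← sum_powerset_eq_sum_powerset_erase he fun S => w S * f S] at hmean
  unfold varOn
  rw [sum_powerset_eq_sum_powerset_erase he fun S => w S * f S ^ 2,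
    sum_congr rfl fun S hS => mul_sq_add_mul_sq (hw₀ S hS) (hw₁ S hS) (f S) (f (insert e S)),
    sum_add_distrib]
  linarith

end Pairing

section EdgeFlip

theorem symmDiff_singleton_eq_insert {α : Type*} [DecidableEq α] {S : Finset α} {e : α}
    (he : e ∉ S) : symmDiff S {e} = insert e S := by
  ext x
  by_cases hx : x = e <;> simp [mem_symmDiff, hx, he]

theorem symmDiff_insert_singleton {α : Type*} [DecidableEq α] {S : Finset α} {e : α}
    (he : e ∉ S) : symmDiff (insert e S) {e} = S := by
  ext x
  by_cases hx : x = e <;> simp [mem_symmDiff, hx, he]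

theorem sum_ite_card_symmDiff_eq_one {α M : Type*} [DecidableEq α] [AddCommMonoid M]
    {E x : Finset α} (hx : x ⊆ E) (F : Finset α → M) :
    ∑ y ∈ E.powerset, (if #(symmDiff x y) = 1 then F y else 0) =
      ∑ e ∈ E, F (symmDiff x {e}) := by
  have himage : E.image (fun e => symmDiff x {e}) = {y ∈ E.powerset | #(symmDiff x y) = 1} := by
    ext y
    simp only [mem_image, mem_filter, mem_powerset, card_eq_one]
    constructor
    · rintro ⟨e, he, rfl⟩
      refine ⟨fun a ha => ?_, e, symmDiff_symmDiff_cancel_left x {e}⟩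
      rcases mem_symmDiff.1 ha with ⟨ha, -⟩ | ⟨ha, -⟩
      · exact hx ha
      · exact mem_singleton.1 ha ▸ he
    · rintro ⟨hy, e, hxy⟩
      refine ⟨e, ?_, by rw [← hxy, symmDiff_symmDiff_cancel_left]⟩
      have he : e ∈ symmDiff x y := hxy ▸ mem_singleton_self e
      rcases mem_symmDiff.1 he with ⟨he, -⟩ | ⟨he, -⟩
      · exact hx he
      · exact hy he
  rw [← sum_filter, ← himage, sum_image]
  intro a _ b _ hab
  simpa using congrArg (symmDiff x) hab

variable {E₀ : Finset (Sym2 V)} {π : Finset (Sym2 V) → ℝ}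

theorem PEF_eq_add (x y : Finset (Sym2 V)) :
    PEF E₀ π x y =
      (if x = y then 1 - 1 / (2 * (#E₀ : ℝ)) * ∑ e ∈ E₀, min 1 (π (symmDiff x {e}) / π x)
        else 0) +
      (if #(symmDiff x y) = 1 then 1 / (2 * (#E₀ : ℝ)) * min 1 (π y / π x) else 0) := by
  unfold PEF
  split_ifs with h h' <;> simp_all

theorem sum_PEF_mul {x : Finset (Sym2 V)} (hx : x ⊆ E₀) (f : Finset (Sym2 V) → ℝ) :
    ∑ y ∈ E₀.powerset, PEF E₀ π x y * f y =
      f x - 1 / (2 * (#E₀ : ℝ)) *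
        ∑ e ∈ E₀, min 1 (π (symmDiff x {e}) / π x) * (f x - f (symmDiff x {e})) := by
  simp only [PEF_eq_add, add_mul, sum_add_distrib, ite_mul, zero_mul]
  simp only [sum_ite_eq, mem_powerset.2 hx, if_true]
  simp only [sum_ite_card_symmDiff_eq_one hx, mul_sub, sum_sub_distrib, ← sum_mul, mul_assoc,
    ← mul_sum]
  ring

theorem dirichletOn_PEF (hπ : ∀ S ∈ E₀.powerset, 0 < π S) (f : Finset (Sym2 V) → ℝ) :
    dirichletOn E₀.powerset π (PEF E₀ π) f =
      1 / (2 * (#E₀ : ℝ)) * ∑ e ∈ E₀, ∑ S ∈ (E₀.erase e).powerset,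
        min (π S) (π (insert e S)) * (f S - f (insert e S)) ^ 2 := by
  unfold dirichletOn
  calc _ = ∑ x ∈ E₀.powerset, 1 / (2 * (#E₀ : ℝ)) * ∑ e ∈ E₀,
        min (π x) (π (symmDiff x {e})) * (f x * (f x - f (symmDiff x {e}))) := by
        refine sum_congr rfl fun x hx => ?_
        rw [sum_PEF_mul (mem_powerset.1 hx), sub_sub_cancel, mul_sum, mul_sum, mul_sum]
        refine sum_congr rfl fun e _ => ?_
        have hmin : π x * min 1 (π (symmDiff x {e}) / π x) = min (π x) (π (symmDiff x {e})) := by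
          rw [mul_min_of_nonneg _ _ (hπ x hx).le, mul_one, mul_div_cancel₀ _ (hπ x hx).ne']
        rw [← hmin]
        ring
    _ = _ := by
        rw [← mul_sum, sum_comm]
        congr 1
        refine sum_congr rfl fun e he => ?_
        rw [sum_powerset_eq_sum_powerset_erase he]
        refine sum_congr rfl fun S hS => ?_
        have heS := notMem_of_mem_powerset_erase hS
        rw [symmDiff_singleton_eq_insert heS, symmDiff_insert_singleton heS, min_comm (π _) (π S)]
        ring

theorem dirichletOn_PEF_nonneg (hπ : ∀ S ∈ E₀.powerset, 0 < π S) (f : Finset (Sym2 V) → ℝ) :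
    0 ≤ dirichletOn E₀.powerset π (PEF E₀ π) f := by
  rw [dirichletOn_PEF hπ]
  refine mul_nonneg (by positivity) (sum_nonneg fun e he => sum_nonneg fun S hS => ?_)
  have hS' := subset_of_mem_powerset_erase hS
  exact mul_nonneg (le_min (hπ S (mem_powerset.2 hS')).le
    (hπ _ (mem_powerset.2 (insert_subset he hS'))).le) (sq_nonneg _)

end EdgeFlip

section Clusters

open SimpleGraph

variable {E₀ S : Finset (Sym2 V)}

theorem mem_compOf_s17 {u v : V} : u ∈ compOf S v ↔ (fromEdgeSet (S : Set (Sym2 V))).Reachable v u := by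
  simp [compOf]

theorem compOf_eq_compOf_iff_s17 {u v : V} :
    compOf S u = compOf S v ↔ (fromEdgeSet (S : Set (Sym2 V))).Reachable u v := by
  refine ⟨fun h => mem_compOf_s17.1 (h ▸ mem_compOf_s17.2 (Reachable.refl v)), fun h => ?_⟩
  ext w
  simp only [mem_compOf_s17]
  exact ⟨h.symm.trans, h.trans⟩

theorem mem_compOf_iff_of_reachable {u x y : V}
    (hxy : (fromEdgeSet (S : Set (Sym2 V))).Reachable x y) :
    x ∈ compOf S u ↔ y ∈ compOf S u := by
  simp only [mem_compOf_s17]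
  exact ⟨fun h => h.trans hxy, fun h => h.trans hxy.symm⟩

theorem mem_kappa {C : Finset V} : C ∈ kappa S ↔ ∃ v, compOf S v = C := by
  simp [kappa]

theorem eq_compOf_of_mem_kappa {C : Finset V} (hC : C ∈ kappa S) {u : V} (hu : u ∈ C) :
    C = compOf S u := by
  obtain ⟨v, rfl⟩ := mem_kappa.1 hC
  exact compOf_eq_compOf_iff_s17.2 (mem_compOf_s17.1 hu)

theorem prod_kappa {M : Type*} [CommMonoid M] (g : V → M) :
    ∏ C ∈ kappa S, ∏ v ∈ C, g v = ∏ v, g v := by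
  refine prod_image' g fun u _ => prod_congr ?_ fun _ _ => rfl
  ext v
  simp only [mem_compOf_s17, mem_filter, mem_univ, true_and, compOf_eq_compOf_iff_s17]
  exact ⟨Reachable.symm, Reachable.symm⟩

omit [Fintype V] [DecidableEq V] in
theorem mem_monoEdges {σ : V → Bool} {x y : V} :
    s(x, y) ∈ monoEdges E₀ σ ↔ s(x, y) ∈ E₀ ∧ σ x = σ y := by
  simp [monoEdges]

omit [Fintype V] in
theorem subset_monoEdges_iff {σ : V → Bool} :
    S ⊆ monoEdges E₀ σ ↔
      S ⊆ E₀ ∧ ∀ x y, (fromEdgeSet (S : Set (Sym2 V))).Reachable x y → σ x = σ y := by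
  constructor
  · intro h
    refine ⟨h.trans (filter_subset _ _), fun x y hxy => ?_⟩
    obtain ⟨p⟩ := hxy
    induction p with
    | nil => rfl
    | cons hadj _ ih =>
      rw [fromEdgeSet_adj] at hadj
      exact (mem_monoEdges.1 (h (mem_coe.1 hadj.1))).2.trans ih
  · rintro ⟨hS, hconst⟩ e he
    induction e using Sym2.ind with
    | _ x y =>
      refine mem_monoEdges.2 ⟨hS he, hconst x y ?_⟩
      by_cases hxy : x = y
      · exact hxy ▸ Reachable.refl x
      · exact (fromEdgeSet_adj _).2 ⟨mem_coe.2 he, hxy⟩ |>.reachable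

/-- Spin configurations constant on the clusters of `S` are colourings of the clusters. -/
theorem sum_ite_subset_monoEdges (hS : S ⊆ E₀) {M : Type*} [CommSemiring M] (w : V → Bool → M) :
    ∑ σ : V → Bool, (if S ⊆ monoEdges E₀ σ then ∏ v, w v (σ v) else 0) =
      ∏ C ∈ kappa S, ∑ b, ∏ v ∈ C, w v b := by
  have hmem : ∀ v, compOf S v ∈ kappa S := fun v => mem_kappa.2 ⟨v, rfl⟩
  rw [← sum_filter, ← prod_coe_sort (kappa S), Fintype.prod_sum]
  symm
  refine sum_bij (fun τ _ v => τ ⟨compOf S v, hmem v⟩) (fun τ _ => ?_) (fun τ₁ _ τ₂ _ h => ?_)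
    (fun σ hσ => ?_) (fun τ _ => ?_)
  · simp only [mem_filter, mem_univ, true_and, subset_monoEdges_iff]
    exact ⟨hS, fun x y hxy => by simp only [compOf_eq_compOf_iff_s17.2 hxy]⟩
  · funext ⟨C, hC⟩
    obtain ⟨v, rfl⟩ := mem_kappa.1 hC
    exact congrFun h v
  · have hconst := (subset_monoEdges_iff.1 (mem_filter.1 hσ).2).2
    choose rep hrep using fun C : kappa S => mem_kappa.1 C.2
    refine ⟨fun C => σ (rep C), mem_univ _, funext fun v => hconst _ _ ?_⟩
    exact compOf_eq_compOf_iff_s17.1 (hrep ⟨compOf S v, hmem v⟩)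
  · rw [← prod_kappa (S := S), ← prod_coe_sort (kappa S)]
    refine prod_congr rfl fun C _ => prod_congr rfl fun v hv => ?_
    congr 2
    exact Subtype.ext (eq_compOf_of_mem_kappa C.2 hv)

end Clusters

section EdwardsSokal

variable {E₀ S : Finset (Sym2 V)} {β : Sym2 V → ℝ} {lam : V → ℝ}

def spinWeight (lam : V → ℝ) (σ : V → Bool) : ℝ :=
  ∏ v, if σ v then lam v else 1

omit [DecidableEq V] in
theorem spinWeight_pos (hlam : ∀ v, 0 < lam v) (σ : V → Bool) : 0 < spinWeight lam σ :=
  prod_pos fun v _ => by split_ifs <;> simp [hlam v]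

theorem clusterProd_pos_s17 (hlam : ∀ v, 0 < lam v) (S : Finset (Sym2 V)) : 0 < clusterProd S lam :=
  prod_pos fun _ _ => add_pos one_pos (prod_pos fun v _ => hlam v)

theorem clusterProd_eq_sum (hS : S ⊆ E₀) :
    clusterProd S lam =
      ∑ σ : V → Bool, if S ⊆ monoEdges E₀ σ then spinWeight lam σ else 0 := by
  unfold spinWeight
  rw [sum_ite_subset_monoEdges hS fun v b => if b then lam v else 1, clusterProd]
  simp [add_comm]

theorem PRI_eq_div (σ : V → Bool) :
    PRI E₀ lam S σ = (if S ⊆ monoEdges E₀ σ then spinWeight lam σ else 0) / clusterProd S lam := by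
  unfold PRI
  split_ifs
  · rw [prod_div_distrib, prod_kappa, clusterProd, spinWeight]
  · rw [zero_div]

theorem sum_PRI (hlam : ∀ v, 0 < lam v) (hS : S ⊆ E₀) : ∑ σ, PRI E₀ lam S σ = 1 := by
  simp only [PRI_eq_div, ← sum_div, ← clusterProd_eq_sum hS]
  exact div_self (clusterProd_pos_s17 hlam S).ne'

omit [Fintype V] in
theorem sum_PIR (σ : V → Bool) : ∑ S ∈ E₀.powerset, PIR E₀ β σ S = 1 := by
  have hmono : monoEdges E₀ σ ⊆ E₀ := filter_subset _ _
  unfold PIR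
  rw [← sum_subset (powerset_mono.2 hmono) fun S _ hS => if_neg (mt mem_powerset.2 hS)]
  calc _ = ∏ e ∈ monoEdges E₀ σ, ((1 - (β e)⁻¹) + (β e)⁻¹) :=
        (sum_congr rfl fun S hS => if_pos (mem_powerset.1 hS)).trans (prod_add _ _ _).symm
    _ = 1 := by simp

theorem prod_one_sub_inv_mul_prod_inv {ι : Type*} [DecidableEq ι] {T U : Finset ι} (hTU : T ⊆ U)
    {b : ι → ℝ} (hb : ∀ i ∈ T, b i ≠ 0) :
    (∏ i ∈ T, (1 - (b i)⁻¹)) * ∏ i ∈ U \ T, (b i)⁻¹ = (∏ i ∈ T, (b i - 1)) * ∏ i ∈ U, (b i)⁻¹ := by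
  rw [← prod_sdiff hTU, prod_congr rfl fun i hi => (show 1 - (b i)⁻¹ = (b i - 1) * (b i)⁻¹ by
    field_simp [hb i hi]), prod_mul_distrib]
  ring

omit [Fintype V] in
theorem PIR_eq (hβ : ∀ e ∈ E₀, β e ≠ 0) (σ : V → Bool) :
    PIR E₀ β σ S =
      (if S ⊆ monoEdges E₀ σ then ∏ e ∈ S, (β e - 1) else 0) * ∏ e ∈ monoEdges E₀ σ, (β e)⁻¹ := by
  unfold PIR
  split_ifs with h
  · exact prod_one_sub_inv_mul_prod_inv h fun e he => hβ e (filter_subset _ _ (h he))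
  · rw [zero_mul]

omit [Fintype V] in
theorem PIR_nonneg (hβ : ∀ e ∈ E₀, 1 ≤ β e) (σ : V → Bool) : 0 ≤ PIR E₀ β σ S := by
  have hβ₀ : ∀ e ∈ E₀, 0 < β e := fun e he => zero_lt_one.trans_le (hβ e he)
  rw [PIR_eq fun e he => (hβ₀ e he).ne']
  refine mul_nonneg ?_ (prod_nonneg fun e he => (inv_pos.2 (hβ₀ e (filter_subset _ _ he))).le)
  split_ifs with h
  · exact prod_nonneg fun e he => sub_nonneg.2 (hβ e (filter_subset _ _ (h he)))
  · rfl

omit [Fintype V] in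
theorem PIR_insert (hβ : ∀ e ∈ E₀, β e ≠ 0) {e : Sym2 V} (he : e ∉ S) (σ : V → Bool) :
    PIR E₀ β σ (insert e S) = (if e ∈ monoEdges E₀ σ then β e - 1 else 0) * PIR E₀ β σ S := by
  rw [PIR_eq hβ, PIR_eq hβ, prod_insert he]
  simp only [insert_subset_iff]
  by_cases h₁ : e ∈ monoEdges E₀ σ <;> by_cases h₂ : S ⊆ monoEdges E₀ σ <;> simp [h₁, h₂, mul_assoc]

omit [Fintype V] in
/-- `P_{I→R}(σ, ·)` keeps a monochromatic `e` with probability `1 - 1/β_e` independently of the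
other edges. -/
theorem PIR_mul_PIR_insert_div (hβ : ∀ e ∈ E₀, β e ≠ 0) {e : Sym2 V} (he : e ∉ S)
    (σ : V → Bool) :
    PIR E₀ β σ S * PIR E₀ β σ (insert e S) / (PIR E₀ β σ S + PIR E₀ β σ (insert e S)) =
      (β e)⁻¹ * PIR E₀ β σ (insert e S) := by
  rw [PIR_insert hβ he]
  split_ifs with h
  · have hβe := hβ e (filter_subset _ _ h)
    rcases eq_or_ne (PIR E₀ β σ S) 0 with h₀ | h₀
    · simp [h₀]
    · rw [show PIR E₀ β σ S + (β e - 1) * PIR E₀ β σ S = β e * PIR E₀ β σ S by ring]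
      field_simp
  · simp

theorem wtWRC_eq (hβ : ∀ e ∈ E₀, β e ≠ 0) (hS : S ⊆ E₀) :
    wtWRC E₀ (fun e => 1 - (β e)⁻¹) lam S =
      (∏ e ∈ S, (β e - 1)) * (∏ e ∈ E₀, (β e)⁻¹) * clusterProd S lam := by
  simp only [wtWRC, sub_sub_cancel]
  rw [prod_one_sub_inv_mul_prod_inv hS fun e he => hβ e (hS he)]

/-- The Edwards–Sokal coupling: both sides are `1[S ⊆ M(σ)] ∏_{e ∈ S} (β_e - 1) ∏_v λ_v^{σ(v)}`. -/
theorem wtIsing_mul_PIR (hβ : ∀ e ∈ E₀, β e ≠ 0) (hlam : ∀ v, 0 < lam v) (σ : V → Bool) :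
    wtIsing E₀ β lam σ * PIR E₀ β σ S =
      (∏ e ∈ E₀, β e) * wtWRC E₀ (fun e => 1 - (β e)⁻¹) lam S * PRI E₀ lam S σ := by
  rw [PIR_eq hβ, PRI_eq_div]
  split_ifs with h
  · have hS : S ⊆ E₀ := h.trans (filter_subset _ _)
    have hM : ∏ e ∈ monoEdges E₀ σ, β e ≠ 0 :=
      prod_ne_zero_iff.2 fun e he => hβ e (filter_subset _ _ he)
    have hE : ∏ e ∈ E₀, β e ≠ 0 := prod_ne_zero_iff.2 hβ
    rw [wtWRC_eq hβ hS, wtIsing, ← spinWeight, prod_inv_distrib, prod_inv_distrib]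
    field_simp [(clusterProd_pos_s17 hlam S).ne']
  · simp

theorem ZIsing_eq (hβ : ∀ e ∈ E₀, β e ≠ 0) (hlam : ∀ v, 0 < lam v) :
    ZIsing E₀ β lam = (∏ e ∈ E₀, β e) * ZWRC E₀ (fun e => 1 - (β e)⁻¹) lam := by
  calc ZIsing E₀ β lam = ∑ σ, ∑ S ∈ E₀.powerset, wtIsing E₀ β lam σ * PIR E₀ β σ S := by
        simp only [← mul_sum, sum_PIR, mul_one, ZIsing]
    _ = ∑ S ∈ E₀.powerset, (∏ e ∈ E₀, β e) * wtWRC E₀ (fun e => 1 - (β e)⁻¹) lam S := by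
        rw [sum_comm]
        refine sum_congr rfl fun S hS => ?_
        simp only [wtIsing_mul_PIR hβ hlam, ← mul_sum, sum_PRI hlam (mem_powerset.1 hS), mul_one]
    _ = _ := by rw [ZWRC, mul_sum]

theorem piWRC_mul_PRI (hβ : ∀ e ∈ E₀, β e ≠ 0) (hlam : ∀ v, 0 < lam v) (σ : V → Bool) :
    piWRC E₀ (fun e => 1 - (β e)⁻¹) lam S * PRI E₀ lam S σ =
      piIsing E₀ β lam σ * PIR E₀ β σ S := by
  rw [piWRC, piIsing, div_mul_eq_mul_div, div_mul_eq_mul_div, wtIsing_mul_PIR hβ hlam,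
    ZIsing_eq hβ hlam, mul_assoc, mul_div_mul_left _ _ (prod_ne_zero_iff.2 hβ)]

end EdwardsSokal

section ClusterRatio

open SimpleGraph

variable {E₀ S : Finset (Sym2 V)} {lam : V → ℝ}

/-- Recolouring the cluster of `u` from `true` to `false` is injective, makes `s(u, v)`
monochromatic, and does not decrease the spin weight since `λ ≤ 1`. -/
theorem sum_spinWeight_flip_le (hlam : ∀ v, 0 < lam v ∧ lam v ≤ 1) (hS : S ⊆ E₀) {u v : V}
    (huv : s(u, v) ∈ E₀) :
    ∑ σ : V → Bool, (if S ⊆ monoEdges E₀ σ ∧ σ u = true ∧ σ v = false then spinWeight lam σ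
        else 0) ≤
      ∑ σ : V → Bool, if insert s(u, v) S ⊆ monoEdges E₀ σ then spinWeight lam σ else 0 := by
  set flip : (V → Bool) → V → Bool := fun σ x => if x ∈ compOf S u then false else σ x
  set Γ := univ.filter fun σ : V → Bool => S ⊆ monoEdges E₀ σ ∧ σ u = true ∧ σ v = false
  have hcomp : ∀ σ ∈ Γ, ∀ x ∈ compOf S u, σ x = true := fun σ hσ x hx => by
    obtain ⟨hσS, hu, -⟩ := (mem_filter.1 hσ).2
    rw [← hu]
    exact ((subset_monoEdges_iff.1 hσS).2 u x (mem_compOf_s17.1 hx)).symm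
  have hv : ∀ σ ∈ Γ, v ∉ compOf S u := fun σ hσ hvu =>
    Bool.false_ne_true ((mem_filter.1 hσ).2.2.2 ▸ hcomp σ hσ v hvu)
  have hmaps : ∀ σ ∈ Γ, insert s(u, v) S ⊆ monoEdges E₀ (flip σ) := fun σ hσ => by
    have hconst := (subset_monoEdges_iff.1 (mem_filter.1 hσ).2.1).2
    refine insert_subset (mem_monoEdges.2 ⟨huv, ?_⟩) (subset_monoEdges_iff.2 ⟨hS, ?_⟩)
    · simp [flip, hv σ hσ, (mem_filter.1 hσ).2.2.2, mem_compOf_s17.2 (Reachable.refl u)]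
    · intro x y hxy
      simp only [flip, mem_compOf_iff_of_reachable hxy]
      split_ifs
      · rfl
      · exact hconst x y hxy
  have hinj : Set.InjOn flip Γ := fun σ₁ h₁ σ₂ h₂ h => funext fun x => by
    by_cases hx : x ∈ compOf S u
    · rw [hcomp σ₁ h₁ x hx, hcomp σ₂ h₂ x hx]
    · simpa [flip, hx] using congrFun h x
  have hle : ∀ σ ∈ Γ, spinWeight lam σ ≤ spinWeight lam (flip σ) := fun σ hσ =>
    prod_le_prod (fun x _ => by split_ifs <;> simp [(hlam x).1.le]) fun x _ => by
      by_cases hx : x ∈ compOf S u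
      · simp [flip, hx, hcomp σ hσ x hx, (hlam x).2]
      · simp [flip, hx]
  rw [← sum_filter, ← sum_filter]
  calc ∑ σ ∈ Γ, spinWeight lam σ ≤ ∑ σ ∈ Γ, spinWeight lam (flip σ) := sum_le_sum hle
    _ = ∑ σ ∈ Γ.image flip, spinWeight lam σ := (sum_image hinj).symm
    _ ≤ _ := sum_le_sum_of_subset_of_nonneg
        (fun τ hτ => by
          obtain ⟨σ, hσ, rfl⟩ := mem_image.1 hτ
          exact mem_filter.2 ⟨mem_univ _, hmaps σ hσ⟩)
        fun σ _ _ => (spinWeight_pos (fun x => (hlam x).1) σ).le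

theorem clusterProd_le_three_mul_clusterProd_insert (hlam : ∀ v, 0 < lam v ∧ lam v ≤ 1)
    (hS : S ⊆ E₀) {e : Sym2 V} (he : e ∈ E₀) :
    clusterProd S lam ≤ 3 * clusterProd (insert e S) lam := by
  induction e using Sym2.ind with
  | _ u v =>
  have hsplit : ∀ σ : V → Bool,
      (if S ⊆ monoEdges E₀ σ then spinWeight lam σ else 0) =
        (if insert s(u, v) S ⊆ monoEdges E₀ σ then spinWeight lam σ else 0) +
        (if S ⊆ monoEdges E₀ σ ∧ σ u = true ∧ σ v = false then spinWeight lam σ else 0) +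
        (if S ⊆ monoEdges E₀ σ ∧ σ v = true ∧ σ u = false then spinWeight lam σ else 0) := by
    intro σ
    simp only [insert_subset_iff, mem_monoEdges, he, true_and]
    by_cases h : S ⊆ monoEdges E₀ σ <;> cases σ u <;> cases σ v <;> simp [h]
  have hvu := sum_spinWeight_flip_le hlam hS (Sym2.eq_swap ▸ he : s(v, u) ∈ E₀)
  rw [Sym2.eq_swap] at hvu
  rw [clusterProd_eq_sum hS, clusterProd_eq_sum (insert_subset he hS), sum_congr rfl
    fun σ _ => hsplit σ, sum_add_distrib, sum_add_distrib]
  linarith [sum_spinWeight_flip_le hlam hS he]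

end ClusterRatio

section SwendsenWang

variable {E₀ S : Finset (Sym2 V)} {β : Sym2 V → ℝ} {lam : V → ℝ}
  (hβ : ∀ e ∈ E₀, 1 < β e) (hlam : ∀ v, 0 < lam v)
include hβ hlam

theorem wtWRC_pos_s17 (hS : S ⊆ E₀) : 0 < wtWRC E₀ (fun e => 1 - (β e)⁻¹) lam S := by
  rw [wtWRC_eq (fun e he => (zero_lt_one.trans (hβ e he)).ne') hS]
  exact mul_pos (mul_pos (prod_pos fun e he => sub_pos.2 (hβ e (hS he)))
    (prod_pos fun e he => inv_pos.2 (zero_lt_one.trans (hβ e he)))) (clusterProd_pos_s17 hlam S)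

theorem ZWRC_pos_s17 : 0 < ZWRC E₀ (fun e => 1 - (β e)⁻¹) lam :=
  sum_pos (fun _ hS => wtWRC_pos_s17 hβ hlam (mem_powerset.1 hS)) (powerset_nonempty E₀)

theorem piWRC_pos (hS : S ⊆ E₀) : 0 < piWRC E₀ (fun e => 1 - (β e)⁻¹) lam S :=
  div_pos (wtWRC_pos_s17 hβ hlam hS) (ZWRC_pos_s17 hβ hlam)

theorem sum_piWRC : ∑ S ∈ E₀.powerset, piWRC E₀ (fun e => 1 - (β e)⁻¹) lam S = 1 := by
  simp only [piWRC, ← sum_div]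
  exact div_self (ZWRC_pos_s17 hβ hlam).ne'

theorem piIsing_nonneg (σ : V → Bool) : 0 ≤ piIsing E₀ β lam σ := by
  have hwt : ∀ τ, 0 ≤ wtIsing E₀ β lam τ := fun τ =>
    mul_nonneg (prod_nonneg fun e he => (zero_lt_one.trans (hβ e (filter_subset _ _ he))).le)
      (spinWeight_pos hlam τ).le
  exact div_nonneg (hwt σ) (sum_nonneg fun τ _ => hwt τ)

theorem dirichletOn_PSWwrc (f : Finset (Sym2 V) → ℝ) :
    dirichletOn E₀.powerset (piWRC E₀ (fun e => 1 - (β e)⁻¹) lam) (PSWwrc E₀ β lam) f =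
      ∑ σ, piIsing E₀ β lam σ * varOn E₀.powerset (PIR E₀ β σ) f :=
  dirichletOn_comp_eq_sum_varOn (fun _ hS => sum_PRI hlam (mem_powerset.1 hS))
    (fun _ _ σ _ => piWRC_mul_PRI (fun e he => (zero_lt_one.trans (hβ e he)).ne') hlam σ) f

theorem dirichletOn_PSWwrc_nonneg (f : Finset (Sym2 V) → ℝ) :
    0 ≤ dirichletOn E₀.powerset (piWRC E₀ (fun e => 1 - (β e)⁻¹) lam) (PSWwrc E₀ β lam) f := by
  rw [dirichletOn_PSWwrc hβ hlam]
  exact sum_nonneg fun σ _ => mul_nonneg (piIsing_nonneg hβ hlam σ)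
    (varOn_nonneg (fun _ _ => PIR_nonneg (fun e he => (hβ e he).le) σ) (sum_PIR σ) f)

theorem sum_piIsing_mul_PIR (hS : S ⊆ E₀) :
    ∑ σ, piIsing E₀ β lam σ * PIR E₀ β σ S = piWRC E₀ (fun e => 1 - (β e)⁻¹) lam S := by
  simp only [← piWRC_mul_PRI (fun e he => (zero_lt_one.trans (hβ e he)).ne') hlam, ← mul_sum,
    sum_PRI hlam hS, mul_one]

theorem inv_mul_sum_le_dirichletOn_PSWwrc {e : Sym2 V} (he : e ∈ E₀) (f : Finset (Sym2 V) → ℝ) :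
    (β e)⁻¹ * ∑ S ∈ (E₀.erase e).powerset,
        piWRC E₀ (fun e => 1 - (β e)⁻¹) lam (insert e S) * (f S - f (insert e S)) ^ 2 ≤
      dirichletOn E₀.powerset (piWRC E₀ (fun e => 1 - (β e)⁻¹) lam) (PSWwrc E₀ β lam) f := by
  have hβ₀ : ∀ e ∈ E₀, β e ≠ 0 := fun e he => (zero_lt_one.trans (hβ e he)).ne'
  rw [dirichletOn_PSWwrc hβ hlam]
  calc _ = ∑ σ, piIsing E₀ β lam σ * ∑ S ∈ (E₀.erase e).powerset,
          PIR E₀ β σ S * PIR E₀ β σ (insert e S) / (PIR E₀ β σ S + PIR E₀ β σ (insert e S)) *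
            (f S - f (insert e S)) ^ 2 := by
        simp only [mul_sum]
        rw [sum_comm]
        refine sum_congr rfl fun S hS => ?_
        rw [← sum_piIsing_mul_PIR hβ hlam
          (insert_subset he (subset_of_mem_powerset_erase hS)), sum_mul, mul_sum]
        refine sum_congr rfl fun σ _ => ?_
        rw [PIR_mul_PIR_insert_div hβ₀ (notMem_of_mem_powerset_erase hS)]
        ring
    _ ≤ _ := sum_le_sum fun σ _ => mul_le_mul_of_nonneg_left
        (sum_pair_le_varOn he (fun _ _ => PIR_nonneg (fun e he => (hβ e he).le) σ) (sum_PIR σ) f)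
        (piIsing_nonneg hβ hlam σ)

end SwendsenWang

theorem mul_min_le_six_mul {b x y : ℝ} (hb : 1 < b) (hx : 0 ≤ x) (hy : 0 ≤ y)
    (h : (b - 1) * x ≤ 3 * y) : b * min x y ≤ 6 * y := by
  rcases le_total b 2 with hb2 | hb2
  · nlinarith [min_le_right x y]
  · nlinarith [min_le_left x y]

section Comparison

variable {E₀ : Finset (Sym2 V)} {β : Sym2 V → ℝ} {lam : V → ℝ}
  (hβ : ∀ e ∈ E₀, 1 < β e) (hlam : ∀ v, 0 < lam v ∧ lam v ≤ 1)
include hβ hlam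

theorem sub_one_mul_piWRC_le {S : Finset (Sym2 V)} (hS : S ⊆ E₀) {e : Sym2 V} (he : e ∈ E₀)
    (heS : e ∉ S) :
    (β e - 1) * piWRC E₀ (fun e => 1 - (β e)⁻¹) lam S ≤
      3 * piWRC E₀ (fun e => 1 - (β e)⁻¹) lam (insert e S) := by
  have hβ₀ : ∀ e ∈ E₀, β e ≠ 0 := fun e he => (zero_lt_one.trans (hβ e he)).ne'
  have hK : 0 ≤ (β e - 1) * (∏ a ∈ S, (β a - 1)) * ∏ a ∈ E₀, (β a)⁻¹ :=
    mul_nonneg (mul_nonneg (sub_nonneg.2 (hβ e he).le)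
      (prod_nonneg fun a ha => sub_nonneg.2 (hβ a (hS ha)).le))
      (prod_nonneg fun a ha => (inv_pos.2 (zero_lt_one.trans (hβ a ha))).le)
  have hwt : (β e - 1) * wtWRC E₀ (fun e => 1 - (β e)⁻¹) lam S ≤
      3 * wtWRC E₀ (fun e => 1 - (β e)⁻¹) lam (insert e S) := by
    rw [wtWRC_eq hβ₀ hS, wtWRC_eq hβ₀ (insert_subset he hS), prod_insert heS]
    have := mul_le_mul_of_nonneg_left
      (clusterProd_le_three_mul_clusterProd_insert hlam hS he) hK
    linarith
  simp only [piWRC, ← mul_div_assoc]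
  exact div_le_div_of_nonneg_right hwt (ZWRC_pos_s17 hβ fun v => (hlam v).1).le

theorem sum_min_le_six_mul_dirichletOn_PSWwrc {e : Sym2 V} (he : e ∈ E₀)
    (f : Finset (Sym2 V) → ℝ) :
    ∑ S ∈ (E₀.erase e).powerset,
        min (piWRC E₀ (fun e => 1 - (β e)⁻¹) lam S)
          (piWRC E₀ (fun e => 1 - (β e)⁻¹) lam (insert e S)) * (f S - f (insert e S)) ^ 2 ≤
      6 * dirichletOn E₀.powerset (piWRC E₀ (fun e => 1 - (β e)⁻¹) lam) (PSWwrc E₀ β lam) f := by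
  have hlam₀ : ∀ v, 0 < lam v := fun v => (hlam v).1
  have hβe : 0 < β e := zero_lt_one.trans (hβ e he)
  calc _ ≤ ∑ S ∈ (E₀.erase e).powerset, 6 * ((β e)⁻¹ *
        (piWRC E₀ (fun e => 1 - (β e)⁻¹) lam (insert e S) * (f S - f (insert e S)) ^ 2)) := by
        refine sum_le_sum fun S hS => ?_
        have hS' := subset_of_mem_powerset_erase hS
        have hmin := mul_min_le_six_mul (hβ e he) (piWRC_pos hβ hlam₀ hS').le
          (piWRC_pos hβ hlam₀ (insert_subset he hS')).le
          (sub_one_mul_piWRC_le hβ hlam hS' he (notMem_of_mem_powerset_erase hS))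
        have hmin' : min (piWRC E₀ (fun e => 1 - (β e)⁻¹) lam S)
            (piWRC E₀ (fun e => 1 - (β e)⁻¹) lam (insert e S)) ≤
              6 * ((β e)⁻¹ * piWRC E₀ (fun e => 1 - (β e)⁻¹) lam (insert e S)) := by
          rw [mul_left_comm, le_inv_mul_iff₀ hβe]
          exact hmin
        have := mul_le_mul_of_nonneg_right hmin' (sq_nonneg (f S - f (insert e S)))
        linarith
    _ ≤ _ := by
        rw [← mul_sum, ← mul_sum]
        exact mul_le_mul_of_nonneg_left (inv_mul_sum_le_dirichletOn_PSWwrc hβ hlam₀ he f)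
          (by norm_num)

theorem dirichletOn_PEF_le_three_mul_dirichletOn_PSWwrc (f : Finset (Sym2 V) → ℝ) :
    dirichletOn E₀.powerset (piWRC E₀ (fun e => 1 - (β e)⁻¹) lam)
        (PEF E₀ (piWRC E₀ (fun e => 1 - (β e)⁻¹) lam)) f ≤
      3 * dirichletOn E₀.powerset (piWRC E₀ (fun e => 1 - (β e)⁻¹) lam) (PSWwrc E₀ β lam) f := by
  have hlam₀ : ∀ v, 0 < lam v := fun v => (hlam v).1
  rw [dirichletOn_PEF fun S hS => piWRC_pos hβ hlam₀ (mem_powerset.1 hS)]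
  rcases E₀.eq_empty_or_nonempty with rfl | hE
  · simpa using dirichletOn_PSWwrc_nonneg hβ hlam₀ f
  have hm : (0 : ℝ) < #E₀ := Nat.cast_pos.2 hE.card_pos
  calc _ ≤ 1 / (2 * (#E₀ : ℝ)) * ∑ e ∈ E₀,
        6 * dirichletOn E₀.powerset (piWRC E₀ (fun e => 1 - (β e)⁻¹) lam) (PSWwrc E₀ β lam) f :=
        mul_le_mul_of_nonneg_left (sum_le_sum fun e he =>
          sum_min_le_six_mul_dirichletOn_PSWwrc hβ hlam he f) (by positivity)
    _ = _ := by
        rw [sum_const, nsmul_eq_mul]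
        field_simp
        ring

end Comparison

/-- Comparison of the Swendsen-Wang and edge-flipping dynamics for the weighted random
cluster model with `p_e = 1 − 1/β_e`: `Gap(P_SW^wrc) ≥ Gap(P_EF)/3`. -/
theorem sw_wrc_vs_edge_flip_gap {V : Type*} [Fintype V] [DecidableEq V]
    (G : SimpleGraph V) [DecidableRel G.Adj]
    (β : Sym2 V → ℝ) (lam : V → ℝ)
    (hβ : ∀ e ∈ G.edgeFinset, 1 < β e)
    (hlam : ∀ v : V, 0 < lam v ∧ lam v ≤ 1) :
    gapOn G.edgeFinset.powerset (piWRC G.edgeFinset (fun e => 1 - (β e)⁻¹) lam)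
        (PSWwrc G.edgeFinset β lam) ≥
      gapOn G.edgeFinset.powerset (piWRC G.edgeFinset (fun e => 1 - (β e)⁻¹) lam)
        (PEF G.edgeFinset (piWRC G.edgeFinset (fun e => 1 - (β e)⁻¹) lam)) / 3 := by
  have hπ : ∀ S ∈ G.edgeFinset.powerset, 0 < piWRC G.edgeFinset (fun e => 1 - (β e)⁻¹) lam S :=
    fun S hS => piWRC_pos hβ (fun v => (hlam v).1) (mem_powerset.1 hS)
  exact gapOn_div_le_gapOn three_pos
    (varOn_nonneg (fun S hS => (hπ S hS).le) (sum_piWRC hβ fun v => (hlam v).1))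
    (dirichletOn_PEF_nonneg hπ) (dirichletOn_PEF_le_three_mul_dirichletOn_PSWwrc hβ hlam)

end
end
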